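/- arXiv:1511.09238 — 3 statements merged into one kernel-verified Lean document; each statement's English description precedes it below -/
import Mathlib

section
/- Let G be a totally disconnected locally compact Hausdorff topological group and g ∈ G. Then g normalises some compact open subgroup of G (i.e., there exists a compact open subgroup U with gUg⁻¹ = U) if and only if s(g) = 1 and s(g⁻¹) = 1. -/
open MeasureTheory Pointwise

variable {G : Type*}

/-- The conjugate subgroup `gUg⁻¹`. -/
def conjSubgroup [Group G] (g : G) (U : Subgroup G) : Subgroup G :=
  U.map (MulAut.conj g).toMonoidHom

/-- A subgroup is compact open if its carrier set is compact and open. -/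
def Subgroup.IsCompactOpen [Group G] [TopologicalSpace G] (U : Subgroup G) : Prop :=
  IsCompact (U : Set G) ∧ IsOpen (U : Set G)

/-- The scale `s(g) = min_U [gUg⁻¹ : gUg⁻¹ ∩ U]`, minimum over compact open subgroups. -/
noncomputable def scale [Group G] [TopologicalSpace G] (g : G) : ℕ :=
  sInf { n : ℕ | ∃ U : Subgroup G, U.IsCompactOpen ∧ n = U.relIndex (conjSubgroup g U) }

/-!
An open subgroup has finite index in a compact one, so `s(g) = 1` exactly when `gUg⁻¹ ≤ U` for
some compact open `U`; this gives the forward direction at once. Conversely, let `gUg⁻¹ ≤ U` and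
`V ≤ gVg⁻¹` with `U`, `V` compact open, and compare indices over `X = gUg⁻¹ ∩ V`. Conjugation
preserves relative indices, whence `[U : X] [gVg⁻¹ : X] = [gUg⁻¹ : X] [V : X]`; substituting
`[U : X] = [U : gUg⁻¹] [gUg⁻¹ : X]` and `[gVg⁻¹ : X] = [gVg⁻¹ : V] [V : X]` and cancelling the
nonzero factors leaves `[U : gUg⁻¹] = 1`.
-/

theorem Nat.sInf_eq_one_iff {S : Set ℕ} (hS : 0 ∉ S) : sInf S = 1 ↔ 1 ∈ S := by
  refine ⟨fun h => h ▸ Nat.sInf_mem (Nat.nonempty_of_sInf_eq_succ h), fun h1 => ?_⟩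
  refine le_antisymm (Nat.sInf_le h1) (Nat.one_le_iff_ne_zero.2 ?_)
  rw [Ne, Nat.sInf_eq_zero]
  rintro (h0 | rfl)
  exacts [hS h0, h1]

namespace Subgroup

variable [Group G]

theorem relIndex_mul_relIndex_map_comm {φ : G →* G} (hφ : Function.Injective φ)
    {U V X : Subgroup G} (hX : X ≤ U ⊓ V ⊓ (U.map φ ⊓ V.map φ)) :
    X.relIndex U * X.relIndex (V.map φ) = X.relIndex (U.map φ) * X.relIndex V := by
  have hXW : X ≤ U ⊓ V := hX.trans inf_le_left
  have hXW' : X ≤ U.map φ ⊓ V.map φ := hX.trans inf_le_right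
  have hmap : U.map φ ⊓ V.map φ = (U ⊓ V).map φ := (map_inf U V φ hφ).symm
  have hU' : (U.map φ ⊓ V.map φ).relIndex (U.map φ) = (U ⊓ V).relIndex U := by
    rw [hmap, relIndex_map_map_of_injective _ _ hφ]
  have hV' : (U.map φ ⊓ V.map φ).relIndex (V.map φ) = (U ⊓ V).relIndex V := by
    rw [hmap, relIndex_map_map_of_injective _ _ hφ]
  rw [← relIndex_mul_relIndex _ _ _ hXW inf_le_left,
    ← relIndex_mul_relIndex _ _ _ hXW' inf_le_right,
    ← relIndex_mul_relIndex _ _ _ hXW' inf_le_left,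
    ← relIndex_mul_relIndex _ _ _ hXW inf_le_right, hU', hV']
  ring

variable [TopologicalSpace G] [SeparatelyContinuousMul G]

theorem relIndex_ne_zero_of_isCompact_of_isOpen {A B : Subgroup G}
    (hA : IsCompact (A : Set G)) (hB : IsOpen (B : Set G)) : B.relIndex A ≠ 0 := by
  have : CompactSpace A := isCompact_iff_compactSpace.mp hA
  have : SeparatelyContinuousMul A := A.toSubmonoid.separatelyContinuousMul
  have : Finite (A ⧸ B.subgroupOf A) :=
    quotient_finite_of_isOpen _ (hB.preimage continuous_subtype_val)
  exact index_ne_zero_of_finite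

end Subgroup

section Conjugation

variable [Group G]

theorem coe_conjSubgroup (g : G) (U : Subgroup G) :
    (conjSubgroup g U : Set G) = (fun x => g * x * g⁻¹) '' U :=
  rfl

theorem conjSubgroup_inv_le_iff {g : G} {U : Subgroup G} :
    conjSubgroup g⁻¹ U ≤ U ↔ U ≤ conjSubgroup g U := by
  simp only [SetLike.le_def, conjSubgroup, Subgroup.mem_map]
  constructor
  · exact fun h x hx => ⟨_, h ⟨x, hx, rfl⟩, by simp [mul_assoc]⟩
  · rintro h _ ⟨x, hx, rfl⟩
    obtain ⟨y, hy, rfl⟩ := h hx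
    simpa [mul_assoc] using hy

variable [TopologicalSpace G] [SeparatelyContinuousMul G]

theorem Subgroup.IsCompactOpen.conj {U : Subgroup G} (hU : U.IsCompactOpen) (g : G) :
    (conjSubgroup g U).IsCompactOpen := by
  have hpre : (conjSubgroup g U : Set G) = (fun x => g⁻¹ * x * g⁻¹⁻¹) ⁻¹' U := by
    rw [coe_conjSubgroup, Set.image_eq_preimage_of_inverse] <;> intro x <;> group
  exact ⟨coe_conjSubgroup g U ▸ hU.1.image (IsTopologicalGroup.continuous_conj g),
    hpre ▸ hU.2.preimage (IsTopologicalGroup.continuous_conj g⁻¹)⟩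

theorem conjSubgroup_eq_of_le_of_le_conjSubgroup {g : G} {U V : Subgroup G}
    (hU : U.IsCompactOpen) (hV : V.IsCompactOpen)
    (hgU : conjSubgroup g U ≤ U) (hgV : V ≤ conjSubgroup g V) : conjSubgroup g U = U := by
  set X := conjSubgroup g U ⊓ V
  have hXU : X.relIndex U = X.relIndex (conjSubgroup g U) * (conjSubgroup g U).relIndex U :=
    (Subgroup.relIndex_mul_relIndex _ _ _ inf_le_left hgU).symm
  have hXV : X.relIndex (conjSubgroup g V) = X.relIndex V * V.relIndex (conjSubgroup g V) :=
    (Subgroup.relIndex_mul_relIndex _ _ _ inf_le_right hgV).symm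
  have hX : X ≤ U ⊓ V ⊓ (conjSubgroup g U ⊓ conjSubgroup g V) :=
    le_inf (le_inf (inf_le_left.trans hgU) inf_le_right)
      (le_inf inf_le_left (inf_le_right.trans hgV))
  have hcomm := Subgroup.relIndex_mul_relIndex_map_comm (MulAut.conj g).injective hX
  have hne : X.relIndex (conjSubgroup g U) * X.relIndex V ≠ 0 := by
    rw [Subgroup.inf_relIndex_left, Subgroup.inf_relIndex_right]
    exact mul_ne_zero (Subgroup.relIndex_ne_zero_of_isCompact_of_isOpen (hU.conj g).1 hV.2)
      (Subgroup.relIndex_ne_zero_of_isCompact_of_isOpen hV.1 (hU.conj g).2)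
  have hone : (conjSubgroup g U).relIndex U * V.relIndex (conjSubgroup g V) = 1 := by
    refine mul_left_cancel₀ hne ?_
    calc X.relIndex (conjSubgroup g U) * X.relIndex V *
          ((conjSubgroup g U).relIndex U * V.relIndex (conjSubgroup g V))
        = X.relIndex U * X.relIndex (conjSubgroup g V) := by rw [hXU, hXV]; ring
      _ = X.relIndex (conjSubgroup g U) * X.relIndex V * 1 := by rw [mul_one]; exact hcomm
  exact le_antisymm hgU (Subgroup.relIndex_eq_one.1 (Nat.eq_one_of_mul_eq_one_right hone))

theorem scale_eq_one_iff (g : G) :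
    scale g = 1 ↔ ∃ U : Subgroup G, U.IsCompactOpen ∧ conjSubgroup g U ≤ U := by
  rw [scale, Nat.sInf_eq_one_iff]
  · simp only [Set.mem_ofPred_eq, eq_comm (a := 1), Subgroup.relIndex_eq_one]
  · rintro ⟨U, hU, hzero⟩
    exact Subgroup.relIndex_ne_zero_of_isCompact_of_isOpen (hU.conj g).1 hU.2 hzero.symm

end Conjugation

theorem normalises_compact_open_iff_scale_one_general
    [Group G] [TopologicalSpace G] [IsTopologicalGroup G] (g : G) :
    (∃ U : Subgroup G, U.IsCompactOpen ∧ conjSubgroup g U = U) ↔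
      scale g = 1 ∧ scale g⁻¹ = 1 := by
  constructor
  · rintro ⟨U, hU, hgU⟩
    exact ⟨(scale_eq_one_iff g).2 ⟨U, hU, hgU.le⟩,
      (scale_eq_one_iff g⁻¹).2 ⟨U, hU, conjSubgroup_inv_le_iff.2 hgU.ge⟩⟩
  · rintro ⟨hg, hginv⟩
    obtain ⟨U, hU, hgU⟩ := (scale_eq_one_iff g).1 hg
    obtain ⟨V, hV, hgV⟩ := (scale_eq_one_iff g⁻¹).1 hginv
    exact ⟨U, hU, conjSubgroup_eq_of_le_of_le_conjSubgroup hU hV hgU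
      (conjSubgroup_inv_le_iff.1 hgV)⟩

/-- `g` normalises a compact open subgroup iff `s(g) = 1 = s(g⁻¹)`. -/
theorem normalises_compact_open_iff_scale_one
    [Group G] [TopologicalSpace G] [IsTopologicalGroup G] [LocallyCompactSpace G] [T2Space G]
    [TotallyDisconnectedSpace G] (g : G) :
    (∃ U : Subgroup G, U.IsCompactOpen ∧ conjSubgroup g U = U) ↔
      scale g = 1 ∧ scale g⁻¹ = 1 :=
  normalises_compact_open_iff_scale_one_general g
end

section
/- Let G be a totally disconnected locally compact Hausdorff topological group, g ∈ G, and U a compact open subgroup that is tidy above for g. Then for every n ≥ 1, the n-fold set product (UgU)ⁿ equals Ug ⁿU, and (Ug⁻¹U)ⁿ equals Ug⁻ⁿU (all products being pointwise products of subsets of G). -/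
open MeasureTheory Pointwise

variable {G : Type*}

/-- `U₊ = ⋂_{n ≥ 0} gⁿ U g⁻ⁿ`. -/
def plusSubgroup [Group G] (g : G) (U : Subgroup G) : Subgroup G :=
  ⨅ n : ℕ, conjSubgroup (g ^ n) U

/-- `U₋ = ⋂_{n ≥ 0} g⁻ⁿ U gⁿ`. -/
def minusSubgroup [Group G] (g : G) (U : Subgroup G) : Subgroup G :=
  ⨅ n : ℕ, conjSubgroup (g⁻¹ ^ n) U

/-- `U` is tidy above for `g` if `[gU₊g⁻¹ : U₊] = [gUg⁻¹ : gUg⁻¹ ∩ U]`. -/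
def TidyAbove [Group G] (g : G) (U : Subgroup G) : Prop :=
  (plusSubgroup g U).relIndex (conjSubgroup g (plusSubgroup g U)) = U.relIndex (conjSubgroup g U)

/-- `U₊₊ = ⋃_{n ≥ 0} gⁿ U₊ g⁻ⁿ` as a set. -/
def plusPlusSet [Group G] (g : G) (U : Subgroup G) : Set G :=
  ⋃ n : ℕ, ((conjSubgroup (g ^ n) (plusSubgroup g U) : Subgroup G) : Set G)

/-- `U₋₋ = ⋃_{n ≥ 0} g⁻ⁿ U₋ gⁿ` as a set. -/
def minusMinusSet [Group G] (g : G) (U : Subgroup G) : Set G :=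
  ⋃ n : ℕ, ((conjSubgroup (g⁻¹ ^ n) (minusSubgroup g U) : Subgroup G) : Set G)

/-- `U` is tidy below for `g` if `U₊₊` and `U₋₋` are closed. -/
def TidyBelow [Group G] [TopologicalSpace G] (g : G) (U : Subgroup G) : Prop :=
  IsClosed (plusPlusSet g U) ∧ IsClosed (minusMinusSet g U)

/-- `U` is tidy for `g` if it is tidy above and tidy below for `g`. -/
def Tidy [Group G] [TopologicalSpace G] (g : G) (U : Subgroup G) : Prop :=
  TidyAbove g U ∧ TidyBelow g U

/-!
Tidiness above makes the always injective map `gU₊g⁻¹/U₊ → gUg⁻¹/(gUg⁻¹ ∩ U)` between finite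
coset spaces a bijection, so every `u ∈ U` factors as `a * z` with `a ∈ U₊` and `gzg⁻¹ ∈ U`.
Iterating this and taking a limit point in the compact group `U₊` gives `U = U₊U₋`, and by
inversion `U = U₋U₊`. Then `gⁿUg = (gⁿU₋g⁻ⁿ) gⁿ⁺¹ (g⁻¹U₊g) ⊆ Ugⁿ⁺¹U`, so
`(UgU)ⁿ⁺¹ = U(gⁿUg)U = Ugⁿ⁺¹U`; for `g⁻¹` the roles of `U₊` and `U₋` are exchanged.
-/

section Group

variable [Group G] {g x : G} {U : Subgroup G}

theorem mem_conjSubgroup {h : G} : x ∈ conjSubgroup h U ↔ h⁻¹ * x * h ∈ U := by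
  constructor
  · rintro ⟨u, hu, rfl⟩
    simpa [mul_assoc] using hu
  · exact fun hx => ⟨h⁻¹ * x * h, hx, by simp [mul_assoc]⟩

theorem mem_plusSubgroup : x ∈ plusSubgroup g U ↔ ∀ n : ℕ, (g ^ n)⁻¹ * x * g ^ n ∈ U := by
  simp only [plusSubgroup, Subgroup.mem_iInf, mem_conjSubgroup]

theorem plusSubgroup_inv : plusSubgroup g⁻¹ U = minusSubgroup g U := rfl

theorem minusSubgroup_inv : minusSubgroup g⁻¹ U = plusSubgroup g U := by
  rw [← plusSubgroup_inv, inv_inv]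

theorem mem_minusSubgroup : x ∈ minusSubgroup g U ↔ ∀ n : ℕ, g ^ n * x * (g ^ n)⁻¹ ∈ U := by
  simp only [← plusSubgroup_inv, mem_plusSubgroup, inv_pow, inv_inv]

theorem plusSubgroup_le : plusSubgroup g U ≤ U := fun x hx => by
  simpa using mem_plusSubgroup.mp hx 0

theorem inv_mul_mul_mem_plusSubgroup (hx : x ∈ plusSubgroup g U) :
    g⁻¹ * x * g ∈ plusSubgroup g U :=
  mem_plusSubgroup.mpr fun n => by
    simpa [pow_succ', mul_assoc] using mem_plusSubgroup.mp hx (n + 1)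

theorem conjSubgroup_plusSubgroup_inf :
    conjSubgroup g (plusSubgroup g U) ⊓ U = plusSubgroup g U := by
  refine le_antisymm (fun x ⟨hconj, hU⟩ => mem_plusSubgroup.mpr ?_)
    fun x hx => ⟨mem_conjSubgroup.mpr (inv_mul_mul_mem_plusSubgroup hx), plusSubgroup_le hx⟩
  rintro (_ | n)
  · simpa using hU
  · simpa [pow_succ', mul_assoc] using mem_plusSubgroup.mp (mem_conjSubgroup.mp hconj) n

theorem Subgroup.mul_mul_eq_of_mem_of_subset {S : Set G} (hx : x ∈ S)
    (hS : S ⊆ U * {x} * U) : (U : Set G) * S * U = U * {x} * U := by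
  refine le_antisymm ?_ (by gcongr; exact Set.singleton_subset_iff.mpr hx)
  calc (U : Set G) * S * U ⊆ U * (U * {x} * U) * U := by gcongr
    _ = U * {x} * U := by
      rw [← mul_assoc, ← mul_assoc, coe_mul_coe U, mul_assoc _ (U : Set G), coe_mul_coe U]

theorem mul_singleton_mul_pow_eq_of_subset
    (hU : (U : Set G) ⊆ minusSubgroup g U * plusSubgroup g U) {n : ℕ} (hn : 1 ≤ n) :
    ((U : Set G) * {g} * U) ^ n = U * {g ^ n} * U := by
  induction n, hn using Nat.le_induction with
  | base => simp
  | succ n _ ih =>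
    have hsub : {g ^ n} * (U : Set G) * {g} ⊆ U * {g ^ (n + 1)} * U := by
      rintro _ ⟨_, ⟨_, rfl, u, hu, rfl⟩, _, rfl, rfl⟩
      obtain ⟨a, ha, b, hb, rfl⟩ := hU hu
      refine ⟨_, ⟨_, mem_minusSubgroup.mp ha n, _, rfl, rfl⟩, _,
        by simpa using mem_plusSubgroup.mp hb 1, ?_⟩
      group
    calc ((U : Set G) * {g} * U) ^ (n + 1) = U * ({g ^ n} * (U * U) * {g}) * U := by
          rw [pow_succ, ih]; simp only [mul_assoc]
      _ = U * {g ^ (n + 1)} * U := by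
          rw [coe_mul_coe U]
          exact U.mul_mul_eq_of_mem_of_subset
            ⟨_, ⟨_, rfl, 1, U.one_mem, rfl⟩, _, rfl, by simp [pow_succ]⟩ hsub

theorem Subgroup.exists_inv_mul_mem_of_relIndex_eq {H K : Subgroup G} (hHK : H ≤ K)
    (hfin : U.relIndex K ≠ 0) (hrel : U.relIndex H = U.relIndex K) {k : G} (hk : k ∈ K) :
    ∃ h ∈ H, h⁻¹ * k ∈ U := by
  have : Finite (K ⧸ U.subgroupOf K) := Nat.finite_of_card_ne_zero hfin
  have hbij := (Subgroup.quotientSubgroupOfEmbeddingOfLE U hHK).injective.bijective_of_nat_card_le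
    hrel.ge
  obtain ⟨q, hq⟩ := hbij.2 (QuotientGroup.mk ⟨k, hk⟩)
  induction q using QuotientGroup.induction_on with
  | H h =>
    rw [Subgroup.quotientSubgroupOfEmbeddingOfLE_apply_mk, QuotientGroup.eq,
      Subgroup.mem_subgroupOf] at hq
    exact ⟨h, h.2, by simpa using hq⟩

theorem exists_mem_plusSubgroup_forall_le
    (hstep : ∀ u ∈ U, ∃ a ∈ plusSubgroup g U, g * (a⁻¹ * u) * g⁻¹ ∈ U) (n : ℕ) {u : G}
    (hu : u ∈ U) : ∃ a ∈ plusSubgroup g U, ∀ k ≤ n, g ^ k * (a⁻¹ * u) * (g ^ k)⁻¹ ∈ U := by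
  induction n generalizing u with
  | zero => exact ⟨1, one_mem _, fun k hk => by simpa [Nat.le_zero.mp hk] using hu⟩
  | succ n ih =>
    obtain ⟨a, ha, hga⟩ := hstep u hu
    obtain ⟨b, hb, hgb⟩ := ih hga
    have ha' : a * (g⁻¹ * b * g) ∈ plusSubgroup g U :=
      mul_mem ha (inv_mul_mul_mem_plusSubgroup hb)
    refine ⟨_, ha', ?_⟩
    rintro (_ | k) hk
    · simpa using mul_mem (inv_mem (plusSubgroup_le ha')) hu
    · convert hgb k (by omega) using 1
      rw [pow_succ]
      group

end Group

section TopologicalGroup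

variable [Group G] [TopologicalSpace G] [IsTopologicalGroup G] {g : G} {U : Subgroup G}

theorem Subgroup.relIndex_ne_zero_of_isOpen_of_isCompact {K : Subgroup G}
    (hU : IsOpen (U : Set G)) (hK : IsCompact (K : Set G)) : U.relIndex K ≠ 0 := by
  have : CompactSpace K := isCompact_iff_compactSpace.mp hK
  have := (U.subgroupOf K).quotient_finite_of_isOpen (hU.preimage continuous_subtype_val)
  exact Subgroup.index_ne_zero_of_finite

theorem isCompact_conjSubgroup (h : G) (hU : IsCompact (U : Set G)) :
    IsCompact (conjSubgroup h U : Set G) := by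
  rw [conjSubgroup, Subgroup.coe_map]
  exact hU.image (show Continuous fun x => h * x * h⁻¹ by fun_prop)

theorem isClosed_plusSubgroup (hU : IsClosed (U : Set G)) :
    IsClosed (plusSubgroup g U : Set G) := by
  rw [plusSubgroup, Subgroup.coe_iInf]
  refine isClosed_iInter fun n => ?_
  rw [show (conjSubgroup (g ^ n) U : Set G) = (fun x => (g ^ n)⁻¹ * x * g ^ n) ⁻¹' U from
    Set.ext fun _ => mem_conjSubgroup]
  exact hU.preimage (by fun_prop)

theorem Subgroup.IsCompactOpen.isCompact_plusSubgroup (hU : U.IsCompactOpen) :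
    IsCompact (plusSubgroup g U : Set G) :=
  hU.1.of_isClosed_subset (isClosed_plusSubgroup (U.isClosed_of_isOpen hU.2)) plusSubgroup_le

theorem TidyAbove.exists_mem_plusSubgroup_conj_mem (hta : TidyAbove g U)
    (hU : U.IsCompactOpen) {u : G} (hu : u ∈ U) :
    ∃ a ∈ plusSubgroup g U, g * (a⁻¹ * u) * g⁻¹ ∈ U := by
  have hrel := Subgroup.inf_relIndex_left (conjSubgroup g (plusSubgroup g U)) U
  rw [conjSubgroup_plusSubgroup_inf] at hrel
  obtain ⟨h, hh, hmem⟩ := Subgroup.exists_inv_mul_mem_of_relIndex_eq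
    (Subgroup.map_mono plusSubgroup_le)
    (Subgroup.relIndex_ne_zero_of_isOpen_of_isCompact hU.2 (isCompact_conjSubgroup g hU.1))
    (hrel.symm.trans hta) (k := g * u * g⁻¹) (mem_conjSubgroup.mpr (by simpa [mul_assoc]))
  refine ⟨g⁻¹ * h * g, mem_conjSubgroup.mp hh, ?_⟩
  convert hmem using 1
  group

theorem TidyAbove.coe_subset_plusSubgroup_mul_minusSubgroup (hta : TidyAbove g U)
    (hU : U.IsCompactOpen) : (U : Set G) ⊆ plusSubgroup g U * minusSubgroup g U := by
  intro u hu
  have hUc : IsClosed (U : Set G) := U.isClosed_of_isOpen hU.2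
  let S : ℕ → Set G := fun n =>
    plusSubgroup g U ∩ ⋂ k ≤ n, (fun a => g ^ k * (a⁻¹ * u) * (g ^ k)⁻¹) ⁻¹' U
  have hS_closed (n : ℕ) : IsClosed (S n) :=
    (isClosed_plusSubgroup hUc).inter
      (isClosed_iInter fun k => isClosed_iInter fun _ => hUc.preimage (by fun_prop))
  have hS_anti (n : ℕ) : S (n + 1) ⊆ S n := by
    refine Set.inter_subset_inter_right _ (Set.iInter₂_mono' fun k hk => ⟨k, ?_, subset_rfl⟩)
    omega
  have hS_nonempty (n : ℕ) : (S n).Nonempty := by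
    obtain ⟨a, ha, hak⟩ := exists_mem_plusSubgroup_forall_le
      (fun _ hv => hta.exists_mem_plusSubgroup_conj_mem hU hv) n hu
    exact ⟨a, ha, Set.mem_iInter₂.mpr hak⟩
  obtain ⟨a, ha⟩ := IsCompact.nonempty_iInter_of_sequence_nonempty_isCompact_isClosed S hS_anti
    hS_nonempty (hU.isCompact_plusSubgroup.of_isClosed_subset (hS_closed 0)
      Set.inter_subset_left) hS_closed
  have haS (n : ℕ) : a ∈ S n := Set.mem_iInter.mp ha n
  refine ⟨a, (haS 0).1, a⁻¹ * u, mem_minusSubgroup.mpr fun n => ?_, mul_inv_cancel_left a u⟩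
  exact Set.mem_iInter₂.mp (haS n).2 n le_rfl

end TopologicalGroup

theorem double_coset_power_general
    [Group G] [TopologicalSpace G] [IsTopologicalGroup G]
    (g : G) (U : Subgroup G) (hU : U.IsCompactOpen) (hta : TidyAbove g U) (n : ℕ) (hn : 1 ≤ n) :
    ((U : Set G) * {g} * (U : Set G)) ^ n = (U : Set G) * {g ^ n} * (U : Set G) ∧
    ((U : Set G) * {g⁻¹} * (U : Set G)) ^ n = (U : Set G) * {g⁻¹ ^ n} * (U : Set G) := by
  have hplus_minus := hta.coe_subset_plusSubgroup_mul_minusSubgroup hU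
  have hminus_plus : (U : Set G) ⊆ minusSubgroup g U * plusSubgroup g U := by
    simpa [mul_inv_rev] using Set.inv_subset_inv.mpr hplus_minus
  refine ⟨mul_singleton_mul_pow_eq_of_subset hminus_plus hn,
    mul_singleton_mul_pow_eq_of_subset ?_ hn⟩
  rwa [minusSubgroup_inv, plusSubgroup_inv]

/-- If `U` is tidy above for `g`, then `(UgU)ⁿ = UgⁿU` and
`(Ug⁻¹U)ⁿ = Ug⁻ⁿU` for all `n ≥ 1`. -/
theorem double_coset_power
    [Group G] [TopologicalSpace G] [IsTopologicalGroup G] [LocallyCompactSpace G] [T2Space G]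
    [TotallyDisconnectedSpace G]
    (g : G) (U : Subgroup G) (hU : U.IsCompactOpen) (hta : TidyAbove g U) (n : ℕ) (hn : 1 ≤ n) :
    ((U : Set G) * {g} * (U : Set G)) ^ n = (U : Set G) * {g ^ n} * (U : Set G) ∧
    ((U : Set G) * {g⁻¹} * (U : Set G)) ^ n = (U : Set G) * {g⁻¹ ^ n} * (U : Set G) :=
  double_coset_power_general g U hU hta n hn
end

section
/- Let G be a totally disconnected locally compact Hausdorff topological group, α a bicontinuous group automorphism of G, and U a compact open subgroup of G that is tidy for α. Then the set U⋆ = ⋃_{i≥0} αⁱ(U) is both open and closed in G. -/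
/-!
Tidiness above makes the injection `α(U₊)/U₊ → α(U)/(α(U) ∩ U)` a bijection of finite sets,
so `U = U₊ (U ∩ α⁻¹U)`; iterating and passing to the limit by compactness gives `U = U₊ U₋`.
Hence `αⁱ(U) ⊆ U₊₊ αᴺ(U₋)` for all `i ≥ N`, and `U₊₊ αᴺ(U₋)` is closed (closed times compact).
A limit point of `⋃ αⁱ(U)` outside it must therefore lie in `⋂_N U₊₊ αᴺ(U₋)`, which by
compactness again is `U₊₊ ⋂_N αᴺ(U₋)`, and that set is already contained in `⋃ αⁱ(U)`.
-/

variable {G : Type*}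

/-- `U₊ = ⋂_{n ≥ 0} αⁿ(U)`. -/
def autPlus [Group G] (α : MulAut G) (U : Subgroup G) : Subgroup G :=
  ⨅ n : ℕ, U.map (α ^ n : MulAut G).toMonoidHom

/-- `U₋ = ⋂_{n ≥ 0} α⁻ⁿ(U)`. -/
def autMinus [Group G] (α : MulAut G) (U : Subgroup G) : Subgroup G :=
  ⨅ n : ℕ, U.map (α⁻¹ ^ n : MulAut G).toMonoidHom

/-- `U` is tidy above for `α` if `[α(U₊) : U₊] = [α(U) : α(U) ∩ U]`. -/
def AutTidyAbove [Group G] (α : MulAut G) (U : Subgroup G) : Prop :=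
  (autPlus α U).relIndex ((autPlus α U).map α.toMonoidHom) = U.relIndex (U.map α.toMonoidHom)

/-- `U` is tidy below for `α` if `U₊₊ = ⋃_{n≥0} αⁿ(U₊)` and `U₋₋ = ⋃_{n≥0} α⁻ⁿ(U₋)` are closed. -/
def AutTidyBelow [Group G] [TopologicalSpace G] (α : MulAut G) (U : Subgroup G) : Prop :=
  IsClosed (⋃ n : ℕ, (((autPlus α U).map (α ^ n : MulAut G).toMonoidHom : Subgroup G) : Set G)) ∧
  IsClosed (⋃ n : ℕ, (((autMinus α U).map (α⁻¹ ^ n : MulAut G).toMonoidHom : Subgroup G) : Set G))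

/-- `U` is tidy for `α` if it is tidy above and tidy below for `α`. -/
def AutTidy [Group G] [TopologicalSpace G] (α : MulAut G) (U : Subgroup G) : Prop :=
  AutTidyAbove α U ∧ AutTidyBelow α U

open Pointwise

lemma Subgroup.map_mulAut_mul [Group G] (β γ : MulAut G) (H : Subgroup G) :
    H.map (β * γ).toMonoidHom = (H.map γ.toMonoidHom).map β.toMonoidHom := by
  rw [Subgroup.map_map]
  rfl

section MulAut

variable [Group G] [TopologicalSpace G] {α : MulAut G}

lemma MulAut.continuous_pow (hα : Continuous α) (n : ℕ) : Continuous ⇑(α ^ n) := by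
  induction n with
  | zero => exact continuous_id
  | succ n ih => rw [pow_succ, MulAut.coe_mul]; exact ih.comp hα

lemma MulAut.continuous_symm_pow (hα' : Continuous α.symm) (n : ℕ) :
    Continuous ⇑(α ^ n).symm := by
  rw [← MulAut.inv_def, ← inv_pow]
  exact MulAut.continuous_pow hα' n

lemma Subgroup.isOpen_map_mulAut {H : Subgroup G} (hH : IsOpen (H : Set G))
    (hα' : Continuous α.symm) : IsOpen (H.map α.toMonoidHom : Set G) := by
  rw [Subgroup.map_equiv_eq_comap_symm']
  exact hH.preimage hα'

lemma Subgroup.isCompact_map_mulAut {H : Subgroup G} (hH : IsCompact (H : Set G))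
    (hα : Continuous α) : IsCompact (H.map α.toMonoidHom : Set G) :=
  hH.image hα

end MulAut

lemma Subgroup.coe_subset_mul_of_relIndex_eq [Group G] {H V K : Subgroup G} (hHV : H ≤ V)
    (hV : K.relIndex V ≠ 0) (h : K.relIndex H = K.relIndex V) : (V : Set G) ⊆ H * K := by
  have : Finite (V ⧸ K.subgroupOf V) := Nat.finite_of_card_ne_zero hV
  have hsurj := ((Nat.bijective_iff_injective_and_card
    (Subgroup.quotientSubgroupOfEmbeddingOfLE K hHV)).mpr ⟨Function.Embedding.injective _, h⟩).2
  intro v hv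
  obtain ⟨q, hq⟩ := hsurj (QuotientGroup.mk ⟨v, hv⟩)
  induction q using QuotientGroup.induction_on with
  | H x =>
    rw [Subgroup.quotientSubgroupOfEmbeddingOfLE_apply_mk, QuotientGroup.eq,
      Subgroup.mem_subgroupOf] at hq
    exact ⟨x, x.2, _, hq, mul_inv_cancel_left (x : G) v⟩

lemma Subgroup.relIndex_ne_zero_of_isOpen_of_isCompact_s14 [Group G] [TopologicalSpace G]
    [IsTopologicalGroup G] {K V : Subgroup G} (hK : IsOpen (K : Set G))
    (hV : IsCompact (V : Set G)) : K.relIndex V ≠ 0 := by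
  have : CompactSpace V := isCompact_iff_compactSpace.mp hV
  have : Finite (V ⧸ K.subgroupOf V) :=
    Subgroup.quotient_finite_of_isOpen _ (hK.preimage continuous_subtype_val)
  exact Nat.card_pos.ne'

lemma iInter_mul_subset_mul_iInter [Group G] [TopologicalSpace G] [IsTopologicalGroup G]
    [T2Space G] {C : Set G} {K : ℕ → Set G} (hC : IsClosed C) (hK : ∀ n, IsCompact (K n))
    (hKanti : Antitone K) : ⋂ n, C * K n ⊆ C * ⋂ n, K n := by
  intro x hx
  set S : ℕ → Set G := fun n => K n ∩ (fun d => x * d⁻¹) ⁻¹' C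
  have hS : ∀ n, IsClosed (S n) := fun n =>
    (hK n).isClosed.inter (hC.preimage (continuous_const.mul continuous_inv))
  have hSne : ∀ n, (S n).Nonempty := fun n => by
    obtain ⟨c, hc, d, hd, rfl⟩ := Set.mem_iInter.mp hx n
    exact ⟨d, hd, by simpa using hc⟩
  obtain ⟨d, hd⟩ := IsCompact.nonempty_iInter_of_sequence_nonempty_isCompact_isClosed S
    (fun n => Set.inter_subset_inter_left _ (hKanti n.le_succ)) hSne
    ((hK 0).inter_right (hC.preimage (continuous_const.mul continuous_inv))) hS
  have hd' : ∀ n, d ∈ S n := Set.mem_iInter.mp hd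
  exact ⟨x * d⁻¹, (hd' 0).2, d, Set.mem_iInter.mpr fun n => (hd' n).1, by group⟩

lemma closure_iUnion_subset_union_iInter {X : Type*} [TopologicalSpace X] {A C : ℕ → Set X}
    (hA : ∀ i, IsClosed (A i)) (hC : ∀ N, IsClosed (C N))
    (hAC : ∀ i N, N ≤ i → A i ⊆ C N) :
    closure (⋃ i, A i) ⊆ (⋃ i, A i) ∪ ⋂ N, C N := by
  intro x hx
  by_cases hxA : x ∈ ⋃ i, A i
  · exact Or.inl hxA
  refine Or.inr (Set.mem_iInter.mpr fun N => ?_)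
  have hcover : ⋃ i, A i ⊆ (⋃ i ∈ Set.Iio N, A i) ∪ C N := by
    refine Set.iUnion_subset fun i => ?_
    rcases lt_or_ge i N with hi | hi
    · exact Set.subset_union_of_subset_left
        (Set.subset_biUnion_of_mem (u := A) (Set.mem_Iio.mpr hi)) _
    · exact Set.subset_union_of_subset_right (hAC i N hi) _
  have hclosed : IsClosed ((⋃ i ∈ Set.Iio N, A i) ∪ C N) :=
    ((Set.finite_Iio N).isClosed_biUnion fun i _ => hA i).union (hC N)
  rcases closure_minimal hcover hclosed hx with h | h
  · obtain ⟨i, -, hi⟩ := Set.mem_iUnion₂.mp h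
    exact absurd (Set.mem_iUnion_of_mem i hi) hxA
  · exact h

section Tidy

variable [Group G] {α : MulAut G} {U : Subgroup G}

lemma mem_autPlus {x : G} : x ∈ autPlus α U ↔ ∀ n : ℕ, (α⁻¹ ^ n) x ∈ U := by
  simp only [autPlus, Subgroup.mem_iInf, Subgroup.mem_map_equiv, ← MulAut.inv_def, inv_pow]

lemma mem_autMinus {x : G} : x ∈ autMinus α U ↔ ∀ n : ℕ, (α ^ n) x ∈ U := by
  simp only [autMinus, Subgroup.mem_iInf, Subgroup.mem_map_equiv, ← MulAut.inv_def, inv_pow,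
    inv_inv]

lemma autPlus_le : autPlus α U ≤ U := fun x hx => by
  simpa using mem_autPlus.mp hx 0

lemma autMinus_le : autMinus α U ≤ U := fun x hx => by
  simpa using mem_autMinus.mp hx 0

lemma autPlus_le_map_autPlus : autPlus α U ≤ (autPlus α U).map α.toMonoidHom := fun x hx => by
  rw [Subgroup.mem_map_equiv, ← MulAut.inv_apply, mem_autPlus]
  intro n
  simpa [pow_succ] using mem_autPlus.mp hx (n + 1)

lemma map_autPlus_inf : (autPlus α U).map α.toMonoidHom ⊓ U = autPlus α U := by
  refine le_antisymm (fun x hx => mem_autPlus.mpr ?_) (le_inf autPlus_le_map_autPlus autPlus_le)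
  obtain ⟨hxα, hxU⟩ := Subgroup.mem_inf.mp hx
  rintro (_ | n)
  · simpa using hxU
  · rw [Subgroup.mem_map_equiv, ← MulAut.inv_apply, mem_autPlus] at hxα
    simpa [pow_succ] using hxα n

lemma map_autMinus_le : (autMinus α U).map α.toMonoidHom ≤ autMinus α U := fun x hx => by
  rw [Subgroup.mem_map_equiv, ← MulAut.inv_apply, mem_autMinus] at hx
  refine mem_autMinus.mpr fun n => ?_
  simpa [pow_succ] using hx (n + 1)

lemma antitone_map_pow_autMinus :
    Antitone fun n : ℕ => (autMinus α U).map (α ^ n).toMonoidHom := by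
  refine antitone_nat_of_succ_le fun n => ?_
  rw [pow_succ, Subgroup.map_mulAut_mul]
  exact Subgroup.map_mono map_autMinus_le

/-- `autMinusTrunc α U n = ⋂_{k ≤ n} α⁻ᵏ(U)`. -/
def autMinusTrunc (α : MulAut G) (U : Subgroup G) : ℕ → Set G
  | 0 => U
  | n + 1 => (U : Set G) ∩ α ⁻¹' autMinusTrunc α U n

lemma antitone_autMinusTrunc : Antitone (autMinusTrunc α U) := by
  refine antitone_nat_of_succ_le fun n => ?_
  induction n with
  | zero => exact Set.inter_subset_left
  | succ n ih => exact Set.inter_subset_inter_right _ (Set.preimage_mono ih)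

lemma autMinusTrunc_subset (n : ℕ) : autMinusTrunc α U n ⊆ U :=
  antitone_autMinusTrunc (Nat.zero_le n)

lemma autMinusTrunc_subset_preimage_pow (n : ℕ) :
    autMinusTrunc α U n ⊆ ⇑(α ^ n) ⁻¹' U := by
  induction n with
  | zero => exact fun x hx => hx
  | succ n ih =>
    intro x hx
    simpa only [Set.mem_preimage, pow_succ, MulAut.mul_apply] using ih hx.2

lemma iInter_autMinusTrunc_subset : ⋂ n, autMinusTrunc α U n ⊆ autMinus α U := fun _ hx =>
  mem_autMinus.mpr fun n => autMinusTrunc_subset_preimage_pow n (Set.mem_iInter.mp hx n)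

lemma isClosed_autMinusTrunc [TopologicalSpace G] (hU : IsClosed (U : Set G))
    (hα : Continuous α) (n : ℕ) : IsClosed (autMinusTrunc α U n) := by
  induction n with
  | zero => exact hU
  | succ n ih => exact hU.inter (ih.preimage hα)

variable [TopologicalSpace G]

lemma isClosed_autPlus [T2Space G] (hU : IsCompact (U : Set G)) (hα : Continuous α) :
    IsClosed (autPlus α U : Set G) := by
  rw [autPlus, Subgroup.coe_iInf]
  exact isClosed_iInter fun n =>
    (Subgroup.isCompact_map_mulAut hU (MulAut.continuous_pow hα n)).isClosed

lemma isCompact_autMinus [T2Space G] (hU : IsCompact (U : Set G)) (hα : Continuous α) :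
    IsCompact (autMinus α U : Set G) := by
  have hcoe : (autMinus α U : Set G) = ⋂ n : ℕ, ⇑(α ^ n) ⁻¹' U := by
    ext x
    simp [mem_autMinus]
  refine hU.of_isClosed_subset ?_ autMinus_le
  rw [hcoe]
  exact isClosed_iInter fun n => hU.isClosed.preimage (MulAut.continuous_pow hα n)

variable [IsTopologicalGroup G]

lemma AutTidyAbove.coe_subset_autPlus_mul (h : AutTidyAbove α U) (hU : U.IsCompactOpen)
    (hα : Continuous α) :
    (U : Set G) ⊆ (autPlus α U : Set G) * ((U : Set G) ∩ α ⁻¹' U) := by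
  have hrel :
      U.relIndex ((autPlus α U).map α.toMonoidHom) = U.relIndex (U.map α.toMonoidHom) := by
    have := Subgroup.inf_relIndex_left ((autPlus α U).map α.toMonoidHom) U
    rw [map_autPlus_inf] at this
    rw [← this]
    exact h
  have hsub := Subgroup.coe_subset_mul_of_relIndex_eq (Subgroup.map_mono autPlus_le)
    (Subgroup.relIndex_ne_zero_of_isOpen_of_isCompact_s14 hU.2
      (Subgroup.isCompact_map_mulAut hU.1 hα)) hrel
  intro u hu
  have hαu : α u ∈ U.map α.toMonoidHom := ⟨u, hu, rfl⟩
  obtain ⟨q, hq, w, hw, hqw⟩ := Set.mem_mul.mp (hsub hαu)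
  have hq' : α.symm q ∈ autPlus α U := Subgroup.mem_map_equiv.mp hq
  refine ⟨α.symm q, hq', (α.symm q)⁻¹ * u, ⟨mul_mem (inv_mem (autPlus_le hq')) hu, ?_⟩,
    mul_inv_cancel_left _ _⟩
  show α ((α.symm q)⁻¹ * u) ∈ U
  rw [map_mul, map_inv, MulEquiv.apply_symm_apply, ← hqw, inv_mul_cancel_left]
  exact hw

lemma AutTidyAbove.coe_subset_autPlus_mul_autMinusTrunc (h : AutTidyAbove α U)
    (hU : U.IsCompactOpen) (hα : Continuous α) (n : ℕ) :
    (U : Set G) ⊆ (autPlus α U : Set G) * autMinusTrunc α U n := by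
  induction n with
  | zero => exact fun u hu => ⟨1, one_mem _, u, hu, one_mul u⟩
  | succ n ih =>
    intro u hu
    obtain ⟨p, hp, y, ⟨hyU, hαy⟩, rfl⟩ :=
      Set.mem_mul.mp (h.coe_subset_autPlus_mul hU hα hu)
    obtain ⟨p', hp', d, hd, hpd⟩ := Set.mem_mul.mp (ih hαy)
    have hp'' : α.symm p' ∈ autPlus α U :=
      Subgroup.mem_map_equiv.mp (autPlus_le_map_autPlus hp')
    have hy : y = α.symm p' * α.symm d := by rw [← map_mul, hpd, MulEquiv.symm_apply_apply]
    refine Set.mem_mul.mpr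
      ⟨p * α.symm p', mul_mem hp hp'', α.symm d, ⟨?_, by simpa using hd⟩, ?_⟩
    · rw [SetLike.mem_coe, ← mul_mem_cancel_left (autPlus_le hp''), ← hy]
      exact hyU
    · rw [mul_assoc, ← hy]

lemma AutTidyAbove.coe_subset_autPlus_mul_autMinus [T2Space G] (h : AutTidyAbove α U)
    (hU : U.IsCompactOpen) (hα : Continuous α) :
    (U : Set G) ⊆ (autPlus α U : Set G) * autMinus α U :=
  calc (U : Set G) ⊆ ⋂ n, (autPlus α U : Set G) * autMinusTrunc α U n :=
        Set.subset_iInter (h.coe_subset_autPlus_mul_autMinusTrunc hU hα)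
    _ ⊆ (autPlus α U : Set G) * ⋂ n, autMinusTrunc α U n :=
        iInter_mul_subset_mul_iInter (isClosed_autPlus hU.1 hα)
          (fun n => hU.1.of_isClosed_subset (isClosed_autMinusTrunc hU.1.isClosed hα n)
            (autMinusTrunc_subset n))
          antitone_autMinusTrunc
    _ ⊆ (autPlus α U : Set G) * autMinus α U :=
        Set.mul_subset_mul_left iInter_autMinusTrunc_subset

end Tidy

/-- `U₊₊`, the first of the two sets that `AutTidyBelow` requires to be closed. -/
def autPlusPlus [Group G] (α : MulAut G) (U : Subgroup G) : Set G :=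
  ⋃ n : ℕ, ((autPlus α U).map (α ^ n).toMonoidHom : Set G)

section UnionOfImages

variable [Group G] {α : MulAut G} {U : Subgroup G}

lemma autPlusPlus_mul_iInter_map_pow_autMinus_subset :
    autPlusPlus α U * ⋂ N : ℕ, ((autMinus α U).map (α ^ N).toMonoidHom : Set G) ⊆
      ⋃ i : ℕ, (U.map (α ^ i).toMonoidHom : Set G) := by
  rintro _ ⟨p, hp, d, hd, rfl⟩
  obtain ⟨m, hm⟩ := Set.mem_iUnion.mp hp
  exact Set.mem_iUnion_of_mem m (mul_mem (Subgroup.map_mono autPlus_le hm)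
    (Subgroup.map_mono autMinus_le (Set.mem_iInter.mp hd m)))

lemma AutTidyAbove.map_pow_subset_autPlusPlus_mul [TopologicalSpace G] [IsTopologicalGroup G]
    [T2Space G] (h : AutTidyAbove α U) (hU : U.IsCompactOpen) (hα : Continuous α) {i N : ℕ}
    (hNi : N ≤ i) :
    (U.map (α ^ i).toMonoidHom : Set G) ⊆
      autPlusPlus α U * ((autMinus α U).map (α ^ N).toMonoidHom : Set G) := by
  rintro _ ⟨u, hu, rfl⟩
  obtain ⟨p, hp, d, hd, rfl⟩ := Set.mem_mul.mp (h.coe_subset_autPlus_mul_autMinus hU hα hu)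
  rw [map_mul]
  exact Set.mul_mem_mul (Set.mem_iUnion_of_mem i ⟨p, hp, rfl⟩)
    (antitone_map_pow_autMinus hNi ⟨d, hd, rfl⟩)

end UnionOfImages

theorem tidy_union_isOpen_isClosed_general
    [Group G] [TopologicalSpace G] [IsTopologicalGroup G] [T2Space G]
    (α : MulAut G) (hα : Continuous α) (hα' : Continuous α.symm)
    (U : Subgroup G) (hU : U.IsCompactOpen) (ht : AutTidy α U) :
    IsOpen (⋃ i : ℕ, ((U.map (α ^ i : MulAut G).toMonoidHom : Subgroup G) : Set G)) ∧
    IsClosed (⋃ i : ℕ, ((U.map (α ^ i : MulAut G).toMonoidHom : Subgroup G) : Set G)) := by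
  have hAcpt (i : ℕ) : IsCompact (U.map (α ^ i).toMonoidHom : Set G) :=
    Subgroup.isCompact_map_mulAut hU.1 (MulAut.continuous_pow hα i)
  have hCcpt (N : ℕ) : IsCompact ((autMinus α U).map (α ^ N).toMonoidHom : Set G) :=
    Subgroup.isCompact_map_mulAut (isCompact_autMinus hU.1 hα) (MulAut.continuous_pow hα N)
  have hPP : IsClosed (autPlusPlus α U) := ht.2.1
  refine ⟨isOpen_iUnion fun i =>
    Subgroup.isOpen_map_mulAut hU.2 (MulAut.continuous_symm_pow hα' i),
    isClosed_of_closure_subset ?_⟩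
  refine (closure_iUnion_subset_union_iInter (fun i => (hAcpt i).isClosed)
    (fun N => hPP.mul_right_of_isCompact (hCcpt N))
    fun i N hNi => ht.1.map_pow_subset_autPlusPlus_mul hU hα hNi).trans
    (Set.union_subset subset_rfl ?_)
  exact (iInter_mul_subset_mul_iInter hPP hCcpt fun _ _ hmn =>
    antitone_map_pow_autMinus hmn).trans autPlusPlus_mul_iInter_map_pow_autMinus_subset

/-- If `U` is tidy for a bicontinuous automorphism `α`, then
`U⋆ = ⋃_{i ≥ 0} αⁱ(U)` is open and closed in `G`. -/
theorem tidy_union_isOpen_isClosed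
    [Group G] [TopologicalSpace G] [IsTopologicalGroup G] [LocallyCompactSpace G] [T2Space G]
    [TotallyDisconnectedSpace G]
    (α : MulAut G) (hα : Continuous α) (hα' : Continuous α.symm)
    (U : Subgroup G) (hU : U.IsCompactOpen) (ht : AutTidy α U) :
    IsOpen (⋃ i : ℕ, ((U.map (α ^ i : MulAut G).toMonoidHom : Subgroup G) : Set G)) ∧
    IsClosed (⋃ i : ℕ, ((U.map (α ^ i : MulAut G).toMonoidHom : Subgroup G) : Set G)) :=
  tidy_union_isOpen_isClosed_general α hα hα' U hU ht
end
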